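/- Let g, ĝ, (h_i)_{i∈ψ} and (ĥ_i)_{i∈φ} all be mutually independent random variables, each exponentially distributed with rate 1, where ψ is a nonempty finite index set and φ ⊆ ψ is nonempty. Fix r>0, α≥2, distances d_i>0, and N≥0, and set η = g r^{-α}/(N + Σ_{i∈ψ} h_i d_i^{-α}) and η̂ = ĝ r^{-α}/(N + Σ_{i∈φ} ĥ_i d_i^{-α}). Then for every T ≥ 0 and every S_th > 0, the cell-edge conditional coverage probability satisfies P(η̂ > T | η < S_th) = e^{-T r^α N} ∏_{i∈φ}(1 + T r^α d_i^{-α})^{-1}, i.e., it equals the frequency-reuse-3 coverage probability. -/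

import Mathlib

/-!
The FR1 SINR `η` is a function of `(g, h)` and the FR3 SINR `η̂` of `(ĝ, ĥ|φ)`; these are disjoint
subfamilies of an independent family, so `η` and `η̂` are independent and conditioning on the
event `{η < S_th}`, which has positive probability, leaves the law of `η̂` unchanged.
What remains is the Rayleigh-fading coverage computation: with `s = T r^α` and interference
`I = N + ∑ ĥᵢ dᵢ^{-α} > 0`, the event `η̂ > T` is `ĝ > s I`, whose probability is `E[e^{-s I}]`
because `ĝ ~ Exp(1)` is independent of `I`; this Laplace transform factors over the independent
exponentials `ĥᵢ` as `e^{-s N} ∏ (1 + s dᵢ^{-α})⁻¹`.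
-/

open MeasureTheory ProbabilityTheory Real Set

namespace ProbabilityTheory

section ExponentialDistribution

variable {r : ℝ}

lemma expMeasure_Iic (hr : 0 < r) (x : ℝ) :
    expMeasure r (Iic x) = ENNReal.ofReal (if 0 ≤ x then 1 - exp (-(r * x)) else 0) := by
  have := isProbabilityMeasure_expMeasure hr
  rw [← ofReal_cdf, cdf_expMeasure_eq hr]

lemma expMeasure_Ioi (hr : 0 < r) {t : ℝ} (ht : 0 ≤ t) :
    expMeasure r (Ioi t) = ENNReal.ofReal (exp (-(r * t))) := by
  have := isProbabilityMeasure_expMeasure hr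
  rw [← compl_Iic, prob_compl_eq_one_sub measurableSet_Iic, expMeasure_Iic hr, if_pos ht,
    ← ENNReal.ofReal_one,
    ← ENNReal.ofReal_sub _ (sub_nonneg.2 (exp_le_one_iff.2 (by nlinarith)))]
  simp

lemma expMeasure_Iio_pos (hr : 0 < r) {c : ℝ} (hc : 0 < c) : 0 < expMeasure r (Iio c) := by
  calc (0 : ENNReal) < expMeasure r (Iic (c / 2)) := by
        rw [expMeasure_Iic hr, if_pos (by positivity), ENNReal.ofReal_pos, sub_pos,
          Real.exp_lt_one_iff, neg_lt_zero]
        positivity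
    _ ≤ expMeasure r (Iio c) := measure_mono (Iic_subset_Iio.2 (half_lt_self hc))

lemma ae_pos_expMeasure (hr : 0 < r) : ∀ᵐ x ∂expMeasure r, 0 < x := by
  simp only [ae_iff, not_lt]
  exact (expMeasure_Iic hr 0).trans (by simp)

lemma lintegral_exp_neg_mul_expMeasure (hr : 0 < r) {s : ℝ} (hs : 0 ≤ s) :
    ∫⁻ x, ENNReal.ofReal (exp (-(s * x))) ∂expMeasure r = ENNReal.ofReal (r / (r + s)) := by
  have hrs : 0 < r + s := by linarith
  have hpdf : ∀ r, Measurable (exponentialPDF r) :=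
    fun r => (measurable_exponentialPDFReal r).ennreal_ofReal
  have hdensity : ∀ x, exponentialPDF r x * ENNReal.ofReal (exp (-(s * x)))
      = ENNReal.ofReal (r / (r + s)) * exponentialPDF (r + s) x := by
    intro x
    rcases lt_or_ge x 0 with hx | hx
    · simp [exponentialPDF_of_neg hx]
    rw [exponentialPDF_of_nonneg hx, exponentialPDF_of_nonneg hx,
      ← ENNReal.ofReal_mul (by positivity), ← ENNReal.ofReal_mul (by positivity)]
    congr 1
    field_simp
    rw [← exp_add]
    ring_nf
  calc ∫⁻ x, ENNReal.ofReal (exp (-(s * x))) ∂expMeasure r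
      = ∫⁻ x, exponentialPDF r x * ENNReal.ofReal (exp (-(s * x))) :=
        lintegral_withDensity_eq_lintegral_mul₀ (hpdf r).aemeasurable (by fun_prop)
    _ = ENNReal.ofReal (r / (r + s)) := by
      simp_rw [hdensity]
      rw [lintegral_const_mul _ (hpdf _), lintegral_exponentialPDF_eq_one hrs, mul_one]

end ExponentialDistribution

section Independence

variable {Ω ι β γ δ : Type*} {mΩ : MeasurableSpace Ω} {μ : Measure Ω}
  [mβ : MeasurableSpace β] [MeasurableSpace γ] [MeasurableSpace δ]

lemma measurable_iSup_comap {f : ι → Ω → β} {S : Set ι} (i : ι) (hi : i ∈ S) :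
    Measurable[⨆ j ∈ S, mβ.comap (f j)] (f i) :=
  Measurable.of_comap_le (le_iSup₂ (f := fun j (_ : j ∈ S) => mβ.comap (f j)) i hi)

lemma iIndepFun.indepFun_of_measurable_iSup {f : ι → Ω → β} (hf : iIndepFun f μ)
    (hf_meas : ∀ i, Measurable (f i)) {S T : Set ι} (hST : Disjoint S T)
    {U : Ω → γ} {V : Ω → δ} (hU : Measurable[⨆ i ∈ S, mβ.comap (f i)] U)
    (hV : Measurable[⨆ i ∈ T, mβ.comap (f i)] V) : IndepFun U V μ := by
  rw [IndepFun_iff_Indep]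
  exact indep_of_indep_of_le
    (indep_iSup_of_disjoint (fun i => (hf_meas i).comap_le) hf.iIndep hST)
    hU.comap_le hV.comap_le

lemma IndepFun.cond_preimage [IsFiniteMeasure μ] {X : Ω → γ} {Y : Ω → δ}
    (hXY : IndepFun X Y μ) (hX : Measurable X) {s : Set γ} {t : Set δ} (hs : MeasurableSet s)
    (ht : MeasurableSet t) (hs₀ : μ (X ⁻¹' s) ≠ 0) : μ[Y ⁻¹' t | X ⁻¹' s] = μ (Y ⁻¹' t) := by
  rw [cond_apply (hX hs), hXY.measure_inter_preimage_eq_mul s t hs ht, ← mul_assoc,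
    ENNReal.inv_mul_cancel hs₀ (measure_ne_top _ _), one_mul]

end Independence

section RayleighFading

variable {Ω ι : Type*} {mΩ : MeasurableSpace Ω} {μ : Measure Ω} {r : ℝ}

lemma ae_pos_of_map_eq_expMeasure {X : Ω → ℝ} (hX : Measurable X) (hr : 0 < r)
    (hlaw : μ.map X = expMeasure r) : ∀ᵐ ω ∂μ, 0 < X ω :=
  ae_of_ae_map hX.aemeasurable (hlaw ▸ ae_pos_expMeasure hr)

lemma measure_lt_of_indepFun_expMeasure [IsFiniteMeasure μ] {X Y : Ω → ℝ} (hX : Measurable X)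
    (hY : Measurable Y) (hXY : IndepFun X Y μ) (hr : 0 < r) (hlaw : μ.map X = expMeasure r)
    (hY₀ : ∀ᵐ ω ∂μ, 0 ≤ Y ω) :
    μ {ω | Y ω < X ω} = ∫⁻ ω, ENNReal.ofReal (exp (-(r * Y ω))) ∂μ := by
  have hS : MeasurableSet {p : ℝ × ℝ | p.2 < p.1} :=
    measurableSet_lt measurable_snd measurable_fst
  calc μ {ω | Y ω < X ω} = ((μ.map X).prod (μ.map Y)) {p : ℝ × ℝ | p.2 < p.1} := by
        rw [← (indepFun_iff_map_prod_eq_prod_map_map hX.aemeasurable hY.aemeasurable).1 hXY,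
          Measure.map_apply (hX.prodMk hY) hS]
        rfl
    _ = ∫⁻ y, expMeasure r (Ioi y) ∂μ.map Y := by
        rw [Measure.prod_apply_symm hS, hlaw]
        rfl
    _ = ∫⁻ y, ENNReal.ofReal (exp (-(r * y))) ∂μ.map Y := by
        refine lintegral_congr_ae ?_
        filter_upwards [(ae_map_iff hY.aemeasurable measurableSet_Ici).2 hY₀] with y hy
        exact expMeasure_Ioi hr hy
    _ = _ := lintegral_map (by fun_prop) hY

lemma lintegral_exp_neg_sum_of_iIndepFun [Fintype ι] {Y : ι → Ω → ℝ}
    (hY : ∀ i, Measurable (Y i)) (hind : iIndepFun Y μ) (hr : 0 < r)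
    (hlaw : ∀ i, μ.map (Y i) = expMeasure r) {w : ι → ℝ} (hw : ∀ i, 0 ≤ w i) :
    ∫⁻ ω, ENNReal.ofReal (exp (-∑ i, w i * Y i ω)) ∂μ = ∏ i, ENNReal.ofReal (r / (r + w i)) := by
  have hf : ∀ i, Measurable fun x : ℝ => ENNReal.ofReal (exp (-(w i * x))) := by fun_prop
  calc ∫⁻ ω, ENNReal.ofReal (exp (-∑ i, w i * Y i ω)) ∂μ
      = ∫⁻ ω, ∏ i, ENNReal.ofReal (exp (-(w i * Y i ω))) ∂μ := by
        simp_rw [← ENNReal.ofReal_prod_of_nonneg (fun i _ => exp_nonneg _), ← exp_sum,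
          Finset.sum_neg_distrib]
    _ = ∏ i, ∫⁻ ω, ENNReal.ofReal (exp (-(w i * Y i ω))) ∂μ :=
        lintegral_prod_eq_prod_lintegral_of_indepFun _ _ (hind.comp _ hf)
          fun i => (hf i).comp (hY i)
    _ = ∏ i, ENNReal.ofReal (r / (r + w i)) := by
        refine Finset.prod_congr rfl fun i _ => ?_
        rw [← lintegral_map (hf i) (hY i), hlaw i, lintegral_exp_neg_mul_expMeasure hr (hw i)]

lemma measureReal_lt_div_interference [IsProbabilityMeasure μ] [Fintype ι] [Nonempty ι]
    {X : Ω → ℝ} {Y : ι → Ω → ℝ} (hX : Measurable X) (hY : ∀ i, Measurable (Y i))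
    (hXlaw : μ.map X = expMeasure 1) (hYlaw : ∀ i, μ.map (Y i) = expMeasure 1)
    (hXY : IndepFun X (fun ω i => Y i ω) μ) (hind : iIndepFun Y μ)
    {a N T : ℝ} {w : ι → ℝ} (ha : 0 < a) (hN : 0 ≤ N) (hw : ∀ i, 0 < w i) (hT : 0 ≤ T) :
    μ.real {ω | T < X ω * a / (N + ∑ i, Y i ω * w i)}
      = exp (-(T * a⁻¹ * N)) * ∏ i, (1 + T * a⁻¹ * w i)⁻¹ := by
  set s := T * a⁻¹
  have hs : 0 ≤ s := by positivity
  have hI : ∀ᵐ ω ∂μ, 0 < N + ∑ i, Y i ω * w i := by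
    filter_upwards [ae_all_iff.2 fun i => ae_pos_of_map_eq_expMeasure (hY i) one_pos (hYlaw i)]
      with ω hω
    have := Finset.sum_pos (fun i _ => mul_pos (hω i) (hw i)) Finset.univ_nonempty
    linarith
  have hevent : {ω | T < X ω * a / (N + ∑ i, Y i ω * w i)}
      =ᵐ[μ] {ω | s * (N + ∑ i, Y i ω * w i) < X ω} := by
    filter_upwards [hI] with ω hω
    refine propext ?_
    change T < X ω * a / _ ↔ s * _ < X ω
    rw [lt_div_iff₀ hω, ← div_lt_iff₀ ha, mul_div_right_comm, div_eq_mul_inv T]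
  have hXI : IndepFun X (fun ω => s * (N + ∑ i, Y i ω * w i)) μ :=
    hXY.comp measurable_id (by fun_prop : Measurable fun y : ι → ℝ => s * (N + ∑ i, y i * w i))
  rw [measureReal_def, measure_congr hevent, measure_lt_of_indepFun_expMeasure hX (by fun_prop)
    hXI one_pos hXlaw (hI.mono fun ω hω => by positivity)]
  have hsplit : ∀ ω, ENNReal.ofReal (exp (-(1 * (s * (N + ∑ i, Y i ω * w i)))))
      = ENNReal.ofReal (exp (-(s * N))) * ENNReal.ofReal (exp (-∑ i, s * w i * Y i ω)) := by
    intro ω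
    rw [← ENNReal.ofReal_mul (exp_nonneg _), ← exp_add, one_mul, mul_add, Finset.mul_sum,
      neg_add]
    simp_rw [mul_left_comm s, mul_comm (Y _ ω)]
  rw [lintegral_congr hsplit, lintegral_const_mul _ (by fun_prop),
    lintegral_exp_neg_sum_of_iIndepFun hY hind one_pos hYlaw (fun i => mul_nonneg hs (hw i).le),
    ENNReal.toReal_mul, ENNReal.toReal_ofReal (exp_nonneg _), ENNReal.toReal_prod]
  refine congrArg _ (Finset.prod_congr rfl fun i _ => ?_)
  have := (hw i).le
  rw [ENNReal.toReal_ofReal (by positivity), one_div]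

lemma measure_div_interference_lt_pos [IsFiniteMeasure μ] [Fintype ι] {X : Ω → ℝ}
    {Y : ι → Ω → ℝ} (hX : Measurable X) (hY : ∀ i, Measurable (Y i))
    (hXlaw : μ.map X = expMeasure 1) (hYlaw : ∀ i, μ.map (Y i) = expMeasure 1) (i₀ : ι)
    (hXY : IndepFun X (Y i₀) μ) {a N S : ℝ} {w : ι → ℝ} (ha : 0 < a) (hN : 0 ≤ N)
    (hw : ∀ i, 0 < w i) (hS : 0 < S) :
    0 < μ {ω | X ω * a / (N + ∑ i, Y i ω * w i) < S} := by
  set c := S * w i₀ / a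
  -- on this event the interference exceeds `w i₀` while `X * a < S * w i₀`
  have hsub : (X ⁻¹' Iio c ∩ Y i₀ ⁻¹' Ioi 1 : Set Ω)
      ≤ᵐ[μ] {ω | X ω * a / (N + ∑ i, Y i ω * w i) < S} := by
    filter_upwards [ae_all_iff.2 fun i => ae_pos_of_map_eq_expMeasure (hY i) one_pos (hYlaw i)]
      with ω hω ⟨hXω, hYω⟩
    have hXa : X ω * a < S * w i₀ := (lt_div_iff₀ ha).1 hXω
    have hterm : Y i₀ ω * w i₀ ≤ ∑ i, Y i ω * w i :=
      Finset.single_le_sum (fun i _ => (mul_pos (hω i) (hw i)).le) (Finset.mem_univ i₀)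
    have hYw : w i₀ < Y i₀ ω * w i₀ := lt_mul_left (hw i₀) hYω
    have hD : 0 < N + ∑ i, Y i ω * w i := by linarith [hw i₀]
    change X ω * a / _ < S
    rw [div_lt_iff₀ hD]
    nlinarith
  have hpos : ∀ {Z : Ω → ℝ} {s : Set ℝ}, Measurable Z → μ.map Z = expMeasure 1 →
      MeasurableSet s → 0 < expMeasure 1 s → 0 < μ (Z ⁻¹' s) := fun hZ hlaw hs h => by
    rwa [← Measure.map_apply hZ hs, hlaw]
  calc 0 < μ (X ⁻¹' Iio c) * μ (Y i₀ ⁻¹' Ioi 1) := ENNReal.mul_pos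
        (hpos hX hXlaw measurableSet_Iio
          (expMeasure_Iio_pos one_pos (div_pos (mul_pos hS (hw i₀)) ha))).ne'
        (hpos (hY i₀) (hYlaw i₀) measurableSet_Ioi
          (by rw [expMeasure_Ioi one_pos zero_le_one]; exact ENNReal.ofReal_pos.2 (exp_pos _))).ne'
    _ = μ (X ⁻¹' Iio c ∩ Y i₀ ⁻¹' Ioi 1) :=
        (hXY.measure_inter_preimage_eq_mul _ _ measurableSet_Iio measurableSet_Ioi).symm
    _ ≤ _ := measure_mono_ae hsub

end RayleighFading

end ProbabilityTheory

section SubBands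

variable {Ω ι : Type*} {mΩ : MeasurableSpace Ω} {μ : Measure Ω} {φ : Finset ι}
  {g ghat : Ω → ℝ} {h hhat : ι → Ω → ℝ}

def subBandFading (g ghat : Ω → ℝ) (h hhat : ι → Ω → ℝ) (φ : Finset ι) :
    Bool ⊕ ι ⊕ φ → Ω → ℝ :=
  Sum.elim (fun b => if b then ghat else g) (Sum.elim h fun i => hhat i.1)

lemma measurable_subBandFading (hg : Measurable g) (hghat : Measurable ghat)
    (hh : ∀ i, Measurable (h i)) (hhhat : ∀ i, Measurable (hhat i)) :
    ∀ k, Measurable (subBandFading g ghat h hhat φ k) := by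
  rintro ((_ | _) | i | i)
  exacts [hg, hghat, hh i, hhhat i]

lemma indepFun_sinr_of_iIndepFun_subBandFading [Fintype ι]
    (hind : iIndepFun (subBandFading g ghat h hhat φ) μ)
    (hmeas : ∀ k, Measurable (subBandFading g ghat h hhat φ k)) (a N : ℝ) (w : ι → ℝ) :
    IndepFun (fun ω => g ω * a / (N + ∑ i, h i ω * w i))
      (fun ω => ghat ω * a / (N + ∑ i ∈ φ, hhat i ω * w i)) μ := by
  set F := subBandFading g ghat h hhat φ
  set FR1 : Set (Bool ⊕ ι ⊕ φ) := {.inl false} ∪ range (.inr ∘ .inl)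
  set FR3 : Set (Bool ⊕ ι ⊕ φ) := {.inl true} ∪ range (.inr ∘ .inr)
  set m₁ := ⨆ k ∈ FR1, MeasurableSpace.comap (F k) inferInstance
  set m₃ := ⨆ k ∈ FR3, MeasurableSpace.comap (F k) inferInstance
  have hg₁ : Measurable[m₁] g := measurable_iSup_comap (f := F) (.inl false) (by simp [FR1])
  have hh₁ : ∀ i, Measurable[m₁] (h i) :=
    fun i => measurable_iSup_comap (f := F) (.inr (.inl i)) (by simp [FR1])
  have hghat₃ : Measurable[m₃] ghat := measurable_iSup_comap (f := F) (.inl true) (by simp [FR3])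
  have hhhat₃ : ∀ i ∈ φ, Measurable[m₃] (hhat i) :=
    fun i hi => measurable_iSup_comap (f := F) (.inr (.inr ⟨i, hi⟩)) (by simp [FR3])
  exact hind.indepFun_of_measurable_iSup (S := FR1) (T := FR3) hmeas
    (by simp [FR1, FR3, disjoint_left]) (by fun_prop) (by fun_prop (disch := assumption))

lemma indepFun_signal_interferers_of_iIndepFun_subBandFading
    (hind : iIndepFun (subBandFading g ghat h hhat φ) μ)
    (hmeas : ∀ k, Measurable (subBandFading g ghat h hhat φ k)) :
    IndepFun ghat (fun ω (i : φ) => hhat i ω) μ := by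
  set F := subBandFading g ghat h hhat φ
  have hhhat₃ : ∀ i : φ,
      Measurable[⨆ k ∈ range (.inr ∘ .inr), MeasurableSpace.comap (F k) inferInstance] (hhat i) :=
    fun i => measurable_iSup_comap (f := F) _ (mem_range_self i)
  exact hind.indepFun_of_measurable_iSup (S := {.inl true}) (T := range (.inr ∘ .inr)) hmeas
    (by simp) (measurable_iSup_comap (f := F) (.inl true) (mem_singleton _)) (by fun_prop)

end SubBands

theorem cell_edge_conditional_coverage_uncorrelated_general
    {Ω : Type*} [MeasurableSpace Ω] (μ : Measure Ω) [IsProbabilityMeasure μ]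
    {ι : Type*} [Fintype ι] [Nonempty ι]
    (φ : Finset ι) (hφ : φ.Nonempty)
    (g ghat : Ω → ℝ) (h hhat : ι → Ω → ℝ)
    (hg_meas : Measurable g) (hghat_meas : Measurable ghat)
    (hh_meas : ∀ i, Measurable (h i)) (hhhat_meas : ∀ i, Measurable (hhat i))
    (hg_exp : Measure.map g μ = expMeasure 1)
    (hghat_exp : Measure.map ghat μ = expMeasure 1)
    (hh_exp : ∀ i, Measure.map (h i) μ = expMeasure 1)
    (hhhat_exp : ∀ i ∈ φ, Measure.map (hhat i) μ = expMeasure 1)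
    (h_indep : iIndepFun
      (fun x : Bool ⊕ ι ⊕ {i // i ∈ φ} =>
        Sum.elim (fun b => if b then ghat else g)
          (Sum.elim h (fun i => hhat i.1)) x) μ)
    (r α N : ℝ) (hr : 0 < r) (hN : 0 ≤ N)
    (d : ι → ℝ) (hd : ∀ i, 0 < d i)
    (T Sth : ℝ) (hT : 0 ≤ T) (hSth : 0 < Sth) :
    ((μ[|{ω | g ω * r ^ (-α) / (N + ∑ i, h i ω * d i ^ (-α)) < Sth}])
        {ω | T < ghat ω * r ^ (-α) / (N + ∑ i ∈ φ, hhat i ω * d i ^ (-α))}).toReal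
      = Real.exp (-(T * r ^ α * N)) * ∏ i ∈ φ, (1 + T * r ^ α * d i ^ (-α))⁻¹ := by
  have hind : iIndepFun (subBandFading g ghat h hhat φ) μ := h_indep
  have hmeas := measurable_subBandFading (φ := φ) hg_meas hghat_meas hh_meas hhhat_meas
  have hr' : 0 < r ^ (-α) := rpow_pos_of_pos hr _
  have hw : ∀ i, 0 < d i ^ (-α) := fun i => rpow_pos_of_pos (hd i) _
  have hedge : μ {ω | g ω * r ^ (-α) / (N + ∑ i, h i ω * d i ^ (-α)) < Sth} ≠ 0 :=
    (measure_div_interference_lt_pos hg_meas hh_meas hg_exp hh_exp (Classical.arbitrary ι)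
      (hind.indepFun (i := .inl false) (j := .inr (.inl _)) (by simp)) hr' hN hw hSth).ne'
  have hcoverage : μ.real {ω | T < ghat ω * r ^ (-α) / (N + ∑ i ∈ φ, hhat i ω * d i ^ (-α))}
      = exp (-(T * r ^ α * N)) * ∏ i ∈ φ, (1 + T * r ^ α * d i ^ (-α))⁻¹ := by
    have := hφ.to_subtype
    have hcov := measureReal_lt_div_interference (Y := fun i : φ => hhat i) hghat_meas
      (fun i => hhhat_meas i) hghat_exp (fun i => hhhat_exp i i.2)
      (indepFun_signal_interferers_of_iIndepFun_subBandFading hind hmeas)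
      (hind.precomp (g := .inr ∘ .inr) (Sum.inr_injective.comp Sum.inr_injective))
      hr' hN (fun i => hw i) hT
    rw [show (r ^ (-α))⁻¹ = r ^ α by rw [rpow_neg hr.le, inv_inv]] at hcov
    simpa only [← Finset.sum_coe_sort φ, ← Finset.prod_coe_sort φ] using hcov
  have hcond := (indepFun_sinr_of_iIndepFun_subBandFading hind hmeas (r ^ (-α)) N
    fun i => d i ^ (-α)).cond_preimage (t := Ioi T) (by fun_prop) measurableSet_Iio
    measurableSet_Ioi hedge
  rw [← hcoverage]
  exact congrArg ENNReal.toReal hcond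

/-- cell-edge conditional coverage probability in the uncorrelated sub-band
case.  With FR1 SINR `η = g r^{-α}/(N + ∑ i, h i * d i^{-α})` (interferers over the whole
nonempty finite index type) and FR3 SINR `η̂ = ĝ r^{-α}/(N + ∑ i ∈ φ, ĥ i * d i^{-α})`
(interferers over the nonempty subset `φ`), where `g, ĝ, (h i), (ĥ i)_{i ∈ φ}` are mutually
independent unit-rate exponentials, for `T ≥ 0` and `S_th > 0`,
`P(η̂ > T | η < S_th) = e^{-T r^α N} ∏ i ∈ φ, (1 + T r^α d i^{-α})⁻¹`,
i.e. the FR3 coverage probability. -/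
theorem cell_edge_conditional_coverage_uncorrelated
    {Ω : Type*} [MeasurableSpace Ω] (μ : Measure Ω) [IsProbabilityMeasure μ]
    {ι : Type*} [Fintype ι] [Nonempty ι]
    (φ : Finset ι) (hφ : φ.Nonempty)
    (g ghat : Ω → ℝ) (h hhat : ι → Ω → ℝ)
    (hg_meas : Measurable g) (hghat_meas : Measurable ghat)
    (hh_meas : ∀ i, Measurable (h i)) (hhhat_meas : ∀ i, Measurable (hhat i))
    (hg_exp : Measure.map g μ = expMeasure 1)
    (hghat_exp : Measure.map ghat μ = expMeasure 1)
    (hh_exp : ∀ i, Measure.map (h i) μ = expMeasure 1)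
    (hhhat_exp : ∀ i ∈ φ, Measure.map (hhat i) μ = expMeasure 1)
    (h_indep : iIndepFun
      (fun x : Bool ⊕ ι ⊕ {i // i ∈ φ} =>
        Sum.elim (fun b => if b then ghat else g)
          (Sum.elim h (fun i => hhat i.1)) x) μ)
    (r α N : ℝ) (hr : 0 < r) (hα : 2 ≤ α) (hN : 0 ≤ N)
    (d : ι → ℝ) (hd : ∀ i, 0 < d i)
    (T Sth : ℝ) (hT : 0 ≤ T) (hSth : 0 < Sth) :
    ((μ[|{ω | g ω * r ^ (-α) / (N + ∑ i, h i ω * d i ^ (-α)) < Sth}])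
        {ω | T < ghat ω * r ^ (-α) / (N + ∑ i ∈ φ, hhat i ω * d i ^ (-α))}).toReal
      = Real.exp (-(T * r ^ α * N)) * ∏ i ∈ φ, (1 + T * r ^ α * d i ^ (-α))⁻¹ :=
  cell_edge_conditional_coverage_uncorrelated_general μ φ hφ g ghat h hhat hg_meas hghat_meas
    hh_meas hhhat_meas hg_exp hghat_exp hh_exp hhhat_exp h_indep r α N hr hN d hd T Sth hT hSth
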